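/- arXiv:math/0504309 — 4 statements merged into one kernel-verified Lean document; each statement's English description precedes it below -/
import Mathlib

section
/- Let K be an algebraically closed field and m, n, p ≥ 2 integers invertible in K. Then there exist elements x, y ∈ PGL₂(K) such that x has order m, y has order n, and xy has order p. -/
/-!
By Cayley–Hamilton, a `2 × 2` matrix `M` with eigenvalues `α ≠ β` satisfies
`(α - β) M^k = α^k (M - β) - β^k (M - α)`, so `M^k` is scalar iff `(α / β)^k = 1`: the order
of `M` in `PGL₂(K)` is the multiplicative order of `α / β`. Take primitive roots of unity
`ζ, η, θ` of orders `m, n, p`, `x = diag(ζ, 1)`, and `y` with eigenvalues `η, 1`. Then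
`det (x y) = ζ η = θ b · b` for `b² = ζ η / θ`, and since `ζ ≠ 1` the entries of `y` can be
chosen so that `tr (x y) = θ b + b`; thus `x y` has eigenvalues `θ b, b`.
-/

open Matrix

section QuadraticElement

variable {K A : Type*} [Ring A]

theorem smul_pow_eq_of_sq_eq [CommRing K] [Algebra K A] {M : A} {α β : K}
    (hM : M ^ 2 = (α + β) • M - (α * β) • 1) (k : ℕ) :
    (α - β) • M ^ k = α ^ k • (M - β • 1) - β ^ k • (M - α • 1) := by
  have hα : (M - β • 1) * M = α • (M - β • 1) := by
    rw [sub_mul, smul_one_mul, ← sq, hM]; module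
  have hβ : (M - α • 1) * M = β • (M - α • 1) := by
    rw [sub_mul, smul_one_mul, ← sq, hM]; module
  induction k with
  | zero => simp only [pow_zero, one_smul]; module
  | succ k ih =>
    rw [pow_succ, ← smul_mul_assoc, ih, sub_mul, smul_mul_assoc, smul_mul_assoc, hα, hβ,
      smul_smul, smul_smul, ← pow_succ, ← pow_succ]

theorem exists_pow_eq_smul_one_iff [Field K] [Algebra K A] {M : A} {α β : K}
    (hM : M ^ 2 = (α + β) • M - (α * β) • 1) (hαβ : α ≠ β) (hM_ne : ∀ c : K, M ≠ c • 1)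
    (k : ℕ) :
    (∃ c : K, M ^ k = c • 1) ↔ α ^ k = β ^ k := by
  have hpow := smul_pow_eq_of_sq_eq hM k
  constructor
  · rintro ⟨c, hc⟩
    by_contra hne
    have hd : α ^ k - β ^ k ≠ 0 := sub_ne_zero.mpr hne
    have hlin : (α ^ k - β ^ k) • M = ((α - β) * c + α ^ k * β - β ^ k * α) • (1 : A) := by
      rw [hc] at hpow
      linear_combination (norm := module) -hpow
    refine hM_ne (((α - β) * c + α ^ k * β - β ^ k * α) / (α ^ k - β ^ k)) ?_
    rw [div_eq_inv_mul, mul_smul, ← hlin, smul_smul, inv_mul_cancel₀ hd, one_smul]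
  · intro hk
    refine ⟨β ^ k, smul_right_injective A (sub_ne_zero.mpr hαβ) ?_⟩
    rw [hk] at hpow
    linear_combination (norm := module) hpow

end QuadraticElement

section FinTwo

variable {K : Type*}

theorem Matrix.sq_eq_trace_smul_sub_det_smul_fin_two [CommRing K]
    (M : Matrix (Fin 2) (Fin 2) K) :
    M ^ 2 = M.trace • M - M.det • 1 := by
  ext i j
  fin_cases i <;> fin_cases j <;>
    simp [sq, Matrix.mul_apply, Matrix.trace_fin_two, Matrix.det_fin_two] <;> ring

theorem Matrix.eq_of_trace_det_smul_one_fin_two [Field K] {c α β : K}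
    (htr : (c • 1 : Matrix (Fin 2) (Fin 2) K).trace = α + β)
    (hdet : (c • 1 : Matrix (Fin 2) (Fin 2) K).det = α * β) : α = β := by
  simp only [trace_smul, trace_one, Fintype.card_fin, Nat.cast_ofNat, smul_eq_mul,
    det_smul_of_tower, det_one, mul_one] at htr hdet
  have : (α - β) ^ 2 = 0 := by linear_combination -(α + β + 2 * c) * htr + 4 * hdet
  exact sub_eq_zero.mp (pow_eq_zero_iff two_ne_zero |>.mp this)

theorem orderOf_mk_GL_fin_two_of_eigenvalues [Field K] (g : GL (Fin 2) K) {θ β : K}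
    (hθ : θ ≠ 1)
    (htr : (g : Matrix (Fin 2) (Fin 2) K).trace = θ * β + β)
    (hdet : (g : Matrix (Fin 2) (Fin 2) K).det = θ * β * β) :
    orderOf (g : GL (Fin 2) K ⧸ Subgroup.center (GL (Fin 2) K)) = orderOf θ := by
  have hβ : β ≠ 0 := by
    rintro rfl
    exact g.det_ne_zero (by simpa using hdet)
  have hαβ : θ * β ≠ β := fun h => hθ (mul_left_eq_self₀.mp h |>.resolve_right hβ)
  have hsq := (g : Matrix (Fin 2) (Fin 2) K).sq_eq_trace_smul_sub_det_smul_fin_two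
  rw [htr, hdet] at hsq
  have hM_ne : ∀ c : K, (g : Matrix (Fin 2) (Fin 2) K) ≠ c • 1 := fun c hc =>
    hαβ (Matrix.eq_of_trace_det_smul_one_fin_two (hc ▸ htr) (hc ▸ hdet))
  rw [orderOf_eq_orderOf_iff]
  intro k
  rw [← QuotientGroup.mk_pow, QuotientGroup.eq_one_iff,
    GeneralLinearGroup.mem_center_iff_val_mem_range_scalar, Units.val_pow_eq_pow_val]
  simp only [Set.mem_range, scalar_apply, ← smul_one_eq_diagonal, eq_comm (a := _ • _)]
  rw [exists_pow_eq_smul_one_iff hsq hαβ hM_ne, mul_pow, mul_left_eq_self₀,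
    or_iff_left (pow_ne_zero k hβ)]

theorem exists_trace_det_trace_diagonal_mul [Field K] {ζ : K} (hζ : ζ ≠ 1) (η s : K) :
    ∃ B : Matrix (Fin 2) (Fin 2) K,
      B.trace = η + 1 ∧ B.det = η ∧ (!![ζ, 0; 0, 1] * B).trace = s := by
  set a := (s - η - 1) / (ζ - 1)
  refine ⟨!![a, 1; a * (η + 1 - a) - η, η + 1 - a], ?_, ?_, ?_⟩
  · rw [trace_fin_two_of]; ring
  · rw [det_fin_two_of]; ring
  · have : (ζ - 1) * a = s - η - 1 := mul_div_cancel₀ _ (sub_ne_zero.mpr hζ)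
    rw [mul_fin_two, trace_fin_two_of]
    linear_combination this

end FinTwo

/-- Let `K` be an algebraically closed field and `m, n, p ≥ 2` integers invertible in `K`.
Then there exist `x, y ∈ PGL₂(K)` (the quotient of `GL₂(K)` by its center, the scalar
matrices) such that `x` has order `m`, `y` has order `n`, and `xy` has order `p`. -/
theorem exists_elements_PGL2_of_orders
    (K : Type*) [Field K] [IsAlgClosed K] (m n p : ℕ)
    (hm : 2 ≤ m) (hn : 2 ≤ n) (hp : 2 ≤ p)
    (hmK : (m : K) ≠ 0) (hnK : (n : K) ≠ 0) (hpK : (p : K) ≠ 0) :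
    ∃ x y : Matrix.GeneralLinearGroup (Fin 2) K ⧸
        Subgroup.center (Matrix.GeneralLinearGroup (Fin 2) K),
      orderOf x = m ∧ orderOf y = n ∧ orderOf (x * y) = p := by
  have := NeZero.mk hmK
  have := NeZero.mk hnK
  have := NeZero.mk hpK
  obtain ⟨ζ, hζ⟩ := HasEnoughRootsOfUnity.exists_primitiveRoot K m
  obtain ⟨η, hη⟩ := HasEnoughRootsOfUnity.exists_primitiveRoot K n
  obtain ⟨θ, hθ⟩ := HasEnoughRootsOfUnity.exists_primitiveRoot K p
  obtain ⟨b, hb⟩ := IsAlgClosed.exists_pow_nat_eq (ζ * η / θ) two_pos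
  obtain ⟨B, hBtr, hBdet, hABtr⟩ :=
    exists_trace_det_trace_diagonal_mul (hζ.ne_one hm) η (θ * b + b)
  let x := GeneralLinearGroup.mkOfDetNeZero !![ζ, 0; 0, 1] (by simpa using hζ.ne_zero (by omega))
  let y := GeneralLinearGroup.mkOfDetNeZero B (hBdet ▸ hη.ne_zero (by omega))
  refine ⟨x, y, ?_, ?_, ?_⟩
  · rw [hζ.eq_orderOf]
    exact orderOf_mk_GL_fin_two_of_eigenvalues (β := 1) x (hζ.ne_one hm) (by simp [x])
      (by simp [x])
  · rw [hη.eq_orderOf]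
    exact orderOf_mk_GL_fin_two_of_eigenvalues (β := 1) y (hη.ne_one hn)
      (by simpa [y] using hBtr) (by simpa [y] using hBdet)
  · rw [← QuotientGroup.mk_mul, hθ.eq_orderOf]
    refine orderOf_mk_GL_fin_two_of_eigenvalues (x * y) (hθ.ne_one hp) hABtr ?_
    rw [Units.val_mul, det_mul]
    simp only [GeneralLinearGroup.val_mkOfDetNeZero, det_fin_two_of, mul_one, mul_zero, sub_zero,
      hBdet, x, y]
    rw [mul_assoc, ← sq, hb, mul_div_cancel₀ _ (hθ.ne_zero (by omega))]
end

section
/- Let m < n be positive integers with m ∤ n. Then the group G of ℂ*-equivariant algebraic automorphisms of ℂ² \ {0}, where ℂ* acts with weights (m,n), consists exactly of the diagonal maps (x,y) ↦ (λ₁x, λ₂y) with λ₁, λ₂ ∈ ℂ*; hence G ≅ ℂ* × ℂ*. -/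
/-- The punctured plane `ℂ² \ {0}`. -/
abbrev PuncturedPlane : Type := {v : ℂ × ℂ // v ≠ 0}

/-- If a polynomial in two variables satisfies the weighted scaling identity
`P(tᵐx, tⁿy) = tᵏ P(x,y)` for all `t ≠ 0` (at a fixed point `(x,y)`), then its value
at `(x,y)` is the sum of its monomial contributions of weighted degree `k`. -/
lemma scaling_coeff (m n k : ℕ) (P : MvPolynomial (Fin 2) ℂ) (x y : ℂ)
    (h : ∀ t : ℂ, t ≠ 0 →
      MvPolynomial.eval ![t ^ m * x, t ^ n * y] P = t ^ k * MvPolynomial.eval ![x, y] P) :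
    MvPolynomial.eval ![x, y] P =
      ∑ s ∈ P.support,
        (if m * s 0 + n * s 1 = k then MvPolynomial.coeff s P * x ^ s 0 * y ^ s 1 else 0) := by
  set G : Polynomial ℂ := ∑ s ∈ P.support,
    Polynomial.monomial (m * s 0 + n * s 1) (MvPolynomial.coeff s P * x ^ s 0 * y ^ s 1) with hGdef
  have hG : ∀ t : ℂ, G.eval t = MvPolynomial.eval ![t ^ m * x, t ^ n * y] P := by
    intro t
    rw [MvPolynomial.eval_eq', hGdef, Polynomial.eval_finset_sum]
    refine Finset.sum_congr rfl fun s _ => ?_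
    rw [Polynomial.eval_monomial, Fin.prod_univ_two]
    simp only [Matrix.cons_val_zero, Matrix.cons_val_one, Matrix.head_cons]
    rw [pow_add, pow_mul, pow_mul]
    ring
  have hzero : G - Polynomial.monomial k (MvPolynomial.eval ![x, y] P) = 0 := by
    apply Polynomial.eq_zero_of_infinite_isRoot
    apply Set.Infinite.mono (s := {t : ℂ | t ≠ 0})
    · intro t ht
      simp only [Set.mem_setOf_eq, Polynomial.IsRoot, Polynomial.eval_sub,
        Polynomial.eval_monomial, hG t, h t ht]
      ring
    · exact (Set.finite_singleton (0 : ℂ)).infinite_compl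
  have hc := congrArg (fun p => Polynomial.coeff p k) hzero
  simp only [Polynomial.coeff_sub, Polynomial.coeff_zero, hGdef,
    Polynomial.finset_sum_coeff, Polynomial.coeff_monomial, if_pos rfl] at hc
  exact (sub_eq_zero.mp hc).symm

/-- Let `m < n` be positive integers with `m ∤ n`, and let `ℂ*` act on `ℂ² \ {0}` with
weights `(m, n)`, i.e. `t·(x,y) = (tᵐ x, tⁿ y)`. Then every `ℂ*`-equivariant algebraic
automorphism of `ℂ² \ {0}` (a bijection such that it and its inverse are given by
polynomials) is diagonal: of the form `(x, y) ↦ (λ₁ x, λ₂ y)` with `λ₁, λ₂ ∈ ℂ*`.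
(Conversely all such diagonal maps clearly belong; hence the group of equivariant
algebraic automorphisms is `ℂ* × ℂ*`.) -/
theorem equivariant_automorphism_is_diagonal
    (m n : ℕ) (hm : 0 < m) (hmn : m < n) (hdvd : ¬ m ∣ n)
    (f : PuncturedPlane ≃ PuncturedPlane)
    (hpoly : ∃ P Q : MvPolynomial (Fin 2) ℂ, ∀ v : PuncturedPlane,
      ((f v : ℂ × ℂ)) =
        (MvPolynomial.eval ![(v : ℂ × ℂ).1, (v : ℂ × ℂ).2] P,
         MvPolynomial.eval ![(v : ℂ × ℂ).1, (v : ℂ × ℂ).2] Q))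
    (hpoly' : ∃ P Q : MvPolynomial (Fin 2) ℂ, ∀ v : PuncturedPlane,
      ((f.symm v : ℂ × ℂ)) =
        (MvPolynomial.eval ![(v : ℂ × ℂ).1, (v : ℂ × ℂ).2] P,
         MvPolynomial.eval ![(v : ℂ × ℂ).1, (v : ℂ × ℂ).2] Q))
    (hequiv : ∀ (t : ℂˣ) (v w : PuncturedPlane),
      (w : ℂ × ℂ) = ((t : ℂ) ^ m * (v : ℂ × ℂ).1, (t : ℂ) ^ n * (v : ℂ × ℂ).2) →
      (f w : ℂ × ℂ) = ((t : ℂ) ^ m * (f v : ℂ × ℂ).1, (t : ℂ) ^ n * (f v : ℂ × ℂ).2)) :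
    ∃ l₁ l₂ : ℂˣ, ∀ v : PuncturedPlane,
      (f v : ℂ × ℂ) = ((l₁ : ℂ) * (v : ℂ × ℂ).1, (l₂ : ℂ) * (v : ℂ × ℂ).2) := by
  obtain ⟨P, Q, hPQ⟩ := hpoly
  have hn : 0 < n := hm.trans hmn
  -- the scaling identity for the two coordinate polynomials
  have hscale : ∀ t : ℂ, t ≠ 0 → ∀ v : PuncturedPlane,
      MvPolynomial.eval ![t ^ m * (v : ℂ × ℂ).1, t ^ n * (v : ℂ × ℂ).2] P
          = t ^ m * MvPolynomial.eval ![(v : ℂ × ℂ).1, (v : ℂ × ℂ).2] P ∧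
      MvPolynomial.eval ![t ^ m * (v : ℂ × ℂ).1, t ^ n * (v : ℂ × ℂ).2] Q
          = t ^ n * MvPolynomial.eval ![(v : ℂ × ℂ).1, (v : ℂ × ℂ).2] Q := by
    intro t ht v
    have hv : (v : ℂ × ℂ).1 ≠ 0 ∨ (v : ℂ × ℂ).2 ≠ 0 := by
      by_contra h
      push_neg at h
      exact v.2 (Prod.ext_iff.mpr ⟨by simpa using h.1, by simpa using h.2⟩)
    have hw : ((t ^ m * (v : ℂ × ℂ).1, t ^ n * (v : ℂ × ℂ).2) : ℂ × ℂ) ≠ 0 := by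
      simp only [Ne, Prod.ext_iff, Prod.fst_zero, Prod.snd_zero, not_and_or]
      rcases hv with hv | hv
      · exact Or.inl (fun h => hv (by simpa [pow_ne_zero _ ht] using mul_eq_zero.mp h))
      · exact Or.inr (fun h => hv (by simpa [pow_ne_zero _ ht] using mul_eq_zero.mp h))
    set w : PuncturedPlane := ⟨(t ^ m * (v : ℂ × ℂ).1, t ^ n * (v : ℂ × ℂ).2), hw⟩
    have heq := hequiv (Units.mk0 t ht) v w rfl
    have h1 := hPQ w
    have h2 := hPQ v
    rw [heq, h2] at h1
    have h1' := Prod.ext_iff.mp h1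
    simp only [Units.val_mk0] at h1'
    exact ⟨h1'.1.symm, h1'.2.symm⟩
  set c := MvPolynomial.coeff (Finsupp.single 0 1) P with hc
  set d := MvPolynomial.coeff (Finsupp.single 1 1) Q with hd
  -- the first coordinate polynomial evaluates to c * x on the punctured plane
  have hP : ∀ v : PuncturedPlane,
      MvPolynomial.eval ![(v : ℂ × ℂ).1, (v : ℂ × ℂ).2] P = c * (v : ℂ × ℂ).1 := by
    intro v
    have h := scaling_coeff m n m P (v : ℂ × ℂ).1 (v : ℂ × ℂ).2
      (fun t ht => (hscale t ht v).1)
    rw [h]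
    have hkey : ∀ s : Fin 2 →₀ ℕ, m * s 0 + n * s 1 = m → s = Finsupp.single 0 1 := by
      intro s hs
      have h1 : s 1 = 0 := by
        by_contra h1
        have : 1 ≤ s 1 := Nat.one_le_iff_ne_zero.mpr h1
        nlinarith [Nat.le_refl (m * s 0)]
      have h0 : s 0 = 1 := by
        rw [h1, Nat.mul_zero, Nat.add_zero] at hs
        exact Nat.eq_of_mul_eq_mul_left hm (by omega)
      ext i
      fin_cases i <;> simp [h0, h1, Finsupp.single_apply]
    have hsum : ∀ s ∈ P.support,
        (if m * s 0 + n * s 1 = m then MvPolynomial.coeff s P * (v : ℂ × ℂ).1 ^ s 0 *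
          (v : ℂ × ℂ).2 ^ s 1 else 0)
        = (if s = Finsupp.single 0 1 then c * (v : ℂ × ℂ).1 else 0) := by
      intro s _
      by_cases hcond : m * s 0 + n * s 1 = m
      · have hseq := hkey s hcond
        rw [if_pos hcond, if_pos hseq, hseq]
        simp [hc, Finsupp.single_apply]
      · have : s ≠ Finsupp.single 0 1 := by
          intro hseq
          apply hcond
          rw [hseq]
          simp [Finsupp.single_apply, hm.ne']
        rw [if_neg hcond, if_neg this]
    rw [Finset.sum_congr rfl hsum, Finset.sum_ite_eq' P.support (Finsupp.single 0 1)
      (fun _ => c * (v : ℂ × ℂ).1)]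
    by_cases hmem : Finsupp.single 0 1 ∈ P.support
    · rw [if_pos hmem]
    · rw [if_neg hmem]
      have : c = 0 := by rwa [hc, ← MvPolynomial.notMem_support_iff]
      rw [this, zero_mul]
  -- the second coordinate polynomial evaluates to d * y on the punctured plane
  have hQ : ∀ v : PuncturedPlane,
      MvPolynomial.eval ![(v : ℂ × ℂ).1, (v : ℂ × ℂ).2] Q = d * (v : ℂ × ℂ).2 := by
    intro v
    have h := scaling_coeff m n n Q (v : ℂ × ℂ).1 (v : ℂ × ℂ).2
      (fun t ht => (hscale t ht v).2)
    rw [h]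
    have hkey : ∀ s : Fin 2 →₀ ℕ, m * s 0 + n * s 1 = n → s = Finsupp.single 1 1 := by
      intro s hs
      have h1 : s 1 = 1 := by
        have hle : s 1 ≤ 1 := by nlinarith
        have hne : s 1 ≠ 0 := by
          intro h
          rw [h, Nat.mul_zero, Nat.add_zero] at hs
          exact hdvd ⟨s 0, hs.symm⟩
        omega
      have h0 : s 0 = 0 := by
        rw [h1, Nat.mul_one] at hs
        have hz : m * s 0 = 0 := by linarith
        rcases Nat.mul_eq_zero.mp hz with h | h
        · omega
        · exact h
      ext i
      fin_cases i <;> simp [h0, h1, Finsupp.single_apply]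
    have hsum : ∀ s ∈ Q.support,
        (if m * s 0 + n * s 1 = n then MvPolynomial.coeff s Q * (v : ℂ × ℂ).1 ^ s 0 *
          (v : ℂ × ℂ).2 ^ s 1 else 0)
        = (if s = Finsupp.single 1 1 then d * (v : ℂ × ℂ).2 else 0) := by
      intro s _
      by_cases hcond : m * s 0 + n * s 1 = n
      · have hseq := hkey s hcond
        rw [if_pos hcond, if_pos hseq, hseq]
        simp [hd, Finsupp.single_apply]
      · have : s ≠ Finsupp.single 1 1 := by
          intro hseq
          apply hcond
          rw [hseq]
          simp [Finsupp.single_apply]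
        rw [if_neg hcond, if_neg this]
    rw [Finset.sum_congr rfl hsum, Finset.sum_ite_eq' Q.support (Finsupp.single 1 1)
      (fun _ => d * (v : ℂ × ℂ).2)]
    by_cases hmem : Finsupp.single 1 1 ∈ Q.support
    · rw [if_pos hmem]
    · rw [if_neg hmem]
      have : d = 0 := by rwa [hd, ← MvPolynomial.notMem_support_iff]
      rw [this, zero_mul]
  -- the diagonal form of f
  have hform : ∀ v : PuncturedPlane,
      (f v : ℂ × ℂ) = (c * (v : ℂ × ℂ).1, d * (v : ℂ × ℂ).2) := by
    intro v
    rw [hPQ v, hP v, hQ v]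
  -- the constants are nonzero
  have hc0 : c ≠ 0 := by
    intro h0
    have hv : ((1, 0) : ℂ × ℂ) ≠ 0 := by simp [Prod.ext_iff]
    have := hform ⟨(1, 0), hv⟩
    simp only [h0, zero_mul, mul_zero] at this
    exact (f ⟨(1, 0), hv⟩).2 (by rw [this]; rfl)
  have hd0 : d ≠ 0 := by
    intro h0
    have hv : ((0, 1) : ℂ × ℂ) ≠ 0 := by simp [Prod.ext_iff]
    have := hform ⟨(0, 1), hv⟩
    simp only [h0, zero_mul, mul_zero] at this
    exact (f ⟨(0, 1), hv⟩).2 (by rw [this]; rfl)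
  exact ⟨Units.mk0 c hc0, Units.mk0 d hd0, fun v => hform v⟩
end

section
/- Let m | n be positive integers with m < n. Then every ℂ*-equivariant algebraic automorphism of ℂ² \ {0} for the weight-(m,n) action has the form (x,y) ↦ (λ₁x, λ₂y + a x^{n/m}) for some λ₁, λ₂ ∈ ℂ* and a ∈ ℂ, and the group of such automorphisms is isomorphic to (ℂ* × ℂ*) ⋉ ℂ, where (λ₁,λ₂) acts on a ∈ ℂ by a ↦ λ₁^{-n/m} λ₂ a. -/
/-!
If `P(t^m x, t^n y) = t^d P(x, y)` for all `t ≠ 0`, then `P(x, y)` equals the value at `(x, y)` of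
the weight-`d` component of `P` for the weights `(m, n)`: the polynomial `t ↦ P(t^m x, t^n y)` has
that value as its `t^d`-coefficient. With `n = m k`, `k ≥ 2`, the only monomial of weight `m` is `x`
and those of weight `n` are `y` and `x^k`, so `f(x, y) = (λ₁ x, λ₂ y + a x^k)`. Since `f (0, 1) ≠ 0`,
`λ₂ ≠ 0`; if `λ₁ = 0`, then `f` would identify `(1, 0)` with `(0, a / λ₂)`.
-/

open MvPolynomial

namespace MvPolynomial
variable {σ R : Type*} [CommRing R]

theorem aeval_C_mul_X_pow_monomial (w : σ → ℕ) (x : σ → R) (d : σ →₀ ℕ) (c : R) :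
    aeval (fun i => Polynomial.C (x i) * Polynomial.X ^ w i) (monomial d c) =
      Polynomial.monomial (Finsupp.weight w d) (eval x (monomial d c)) := by
  simp only [aeval_monomial, eval_monomial, Finsupp.weight_apply, Finsupp.prod, Finsupp.sum,
    mul_pow, Finset.prod_mul_distrib, ← pow_mul, Finset.prod_pow_eq_pow_sum, smul_eq_mul,
    Polynomial.algebraMap_eq, ← Polynomial.C_mul_X_pow_eq_monomial, ← map_pow, ← map_prod,
    map_mul, mul_comm (w _)]
  ring

theorem coeff_aeval_C_mul_X_pow (w : σ → ℕ) (x : σ → R) (φ : MvPolynomial σ R) (j : ℕ) :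
    (aeval (fun i => Polynomial.C (x i) * Polynomial.X ^ w i) φ).coeff j =
      eval x (weightedHomogeneousComponent w j φ) := by
  induction φ using MvPolynomial.induction_on' with
  | monomial d c =>
    have hd := isWeightedHomogeneous_monomial w d c rfl
    rw [aeval_C_mul_X_pow_monomial, Polynomial.coeff_monomial]
    split_ifs with h
    · rw [← h, hd.weightedHomogeneousComponent_same]
    · rw [hd.weightedHomogeneousComponent_ne j (Ne.symm h), map_zero]
  | add p q hp hq => rw [map_add, Polynomial.coeff_add, hp, hq, map_add, map_add]

theorem eval_aeval_C_mul_X_pow (w : σ → ℕ) (x : σ → R) (φ : MvPolynomial σ R) (t : R) :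
    (aeval (fun i => Polynomial.C (x i) * Polynomial.X ^ w i) φ).eval t =
      eval (fun i => t ^ w i * x i) φ := by
  rw [← Polynomial.coe_aeval_eq_eval, comp_aeval_apply]
  simp only [map_mul, map_pow, Polynomial.aeval_X, Polynomial.aeval_C, Algebra.algebraMap_self,
    RingHom.id_apply, aeval_eq_eval, mul_comm (x _)]

theorem eval_weightedHomogeneousComponent_of_scaling [IsDomain R] [Infinite R] (w : σ → ℕ)
    (φ : MvPolynomial σ R) (x : σ → R) (d : ℕ)
    (h : ∀ t : R, t ≠ 0 → eval (fun i => t ^ w i * x i) φ = t ^ d * eval x φ) :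
    eval x (weightedHomogeneousComponent w d φ) = eval x φ := by
  have key : aeval (fun i => Polynomial.C (x i) * Polynomial.X ^ w i) φ =
      Polynomial.C (eval x φ) * Polynomial.X ^ d := by
    refine Polynomial.eq_of_infinite_eval_eq _ _ ((Set.finite_singleton 0).infinite_compl.mono ?_)
    intro t ht
    rw [Set.mem_ofPred_eq, eval_aeval_C_mul_X_pow, h t ht, Polynomial.eval_mul, Polynomial.eval_C,
      Polynomial.eval_X_pow, mul_comm]
  rw [← coeff_aeval_C_mul_X_pow, key, Polynomial.coeff_C_mul_X_pow, if_pos rfl]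

theorem IsWeightedHomogeneous.eq_sum_monomial {w : σ → ℕ} {φ : MvPolynomial σ R} {n : ℕ}
    (hφ : IsWeightedHomogeneous w φ n) {s : Finset (σ →₀ ℕ)}
    (hs : ∀ d, Finsupp.weight w d = n → d ∈ s) :
    φ = ∑ d ∈ s, monomial d (coeff d φ) := by
  classical
  ext d
  rw [coeff_sum]
  simp only [coeff_monomial, Finset.sum_ite_eq']
  split_ifs with hd
  · rfl
  · exact hφ.coeff_eq_zero d fun h => hd (hs d h)

end MvPolynomial

namespace Finsupp

theorem weight_fin_two (w : Fin 2 → ℕ) (d : Fin 2 →₀ ℕ) :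
    weight w d = d 0 * w 0 + d 1 * w 1 := by
  rw [weight_apply, sum_fintype d (fun i c => c • w i) fun _ => zero_smul _ _, Fin.sum_univ_two,
    smul_eq_mul, smul_eq_mul]

theorem fin_two_ext {d e : Fin 2 →₀ ℕ} (h0 : d 0 = e 0) (h1 : d 1 = e 1) : d = e :=
  Finsupp.ext fun i => by fin_cases i <;> assumption

end Finsupp

section WeightsMultiple

variable {m k : ℕ} {R : Type*} [CommRing R]

theorem eq_single_of_weight_eq_left (hm : 0 < m) (hk : 1 < k) {d : Fin 2 →₀ ℕ}
    (h : Finsupp.weight ![m, m * k] d = m) : d = Finsupp.single 0 1 := by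
  have h' : d 0 + d 1 * k = 1 := Nat.eq_of_mul_eq_mul_left hm <| by
    rw [Finsupp.weight_fin_two] at h
    simp only [Matrix.cons_val_zero, Matrix.cons_val_one] at h
    linarith
  have h1 : d 1 = 0 := by nlinarith
  rw [h1, zero_mul, add_zero] at h'
  exact Finsupp.fin_two_ext (by simpa using h') (by simpa using h1)

theorem eq_single_or_eq_single_of_weight_eq_right (hm : 0 < m) (hk : 0 < k) {d : Fin 2 →₀ ℕ}
    (h : Finsupp.weight ![m, m * k] d = m * k) :
    d = Finsupp.single 1 1 ∨ d = Finsupp.single 0 k := by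
  have h' : d 0 + d 1 * k = k := Nat.eq_of_mul_eq_mul_left hm <| by
    rw [Finsupp.weight_fin_two] at h
    simp only [Matrix.cons_val_zero, Matrix.cons_val_one] at h
    linarith
  have h1 : d 1 ≤ 1 := by nlinarith
  interval_cases hd : d 1
  · exact Or.inr (Finsupp.fin_two_ext (by simp; omega) (by simp [hd]))
  · exact Or.inl (Finsupp.fin_two_ext (by simp; omega) (by simp [hd]))

theorem eval_weightedHomogeneousComponent_left (hm : 0 < m) (hk : 1 < k)
    (P : MvPolynomial (Fin 2) R) (x y : R) :
    eval ![x, y] (weightedHomogeneousComponent ![m, m * k] m P) =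
      coeff (Finsupp.single 0 1) P * x := by
  rw [(weightedHomogeneousComponent_isWeightedHomogeneous m P).eq_monomial_of_unique_weight
      fun d => eq_single_of_weight_eq_left hm hk,
    eval_monomial, coeff_weightedHomogeneousComponent, if_pos (by simp [Finsupp.weight_fin_two])]
  simp

theorem eval_weightedHomogeneousComponent_right (hm : 0 < m) (hk : 0 < k)
    (Q : MvPolynomial (Fin 2) R) (x y : R) :
    eval ![x, y] (weightedHomogeneousComponent ![m, m * k] (m * k) Q) =
      coeff (Finsupp.single 1 1) Q * y + coeff (Finsupp.single 0 k) Q * x ^ k := by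
  have hne : Finsupp.single (1 : Fin 2) 1 ≠ Finsupp.single 0 k := fun h => by
    simpa using DFunLike.congr_fun h 1
  rw [(weightedHomogeneousComponent_isWeightedHomogeneous (m * k) Q).eq_sum_monomial
      (s := {Finsupp.single 1 1, Finsupp.single 0 k})
      fun d hd => by simpa using eq_single_or_eq_single_of_weight_eq_right hm hk hd,
    Finset.sum_pair hne, map_add, eval_monomial, eval_monomial, coeff_weightedHomogeneousComponent,
    coeff_weightedHomogeneousComponent, if_pos (by simp [Finsupp.weight_fin_two]),
    if_pos (by simp [Finsupp.weight_fin_two, mul_comm])]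
  simp

end WeightsMultiple

theorem eval_weightedHomogeneousComponent_of_equivariant {m n d : ℕ}
    {P : MvPolynomial (Fin 2) ℂ} {g : PuncturedPlane → ℂ}
    (hg : ∀ v : PuncturedPlane, g v = eval ![(v : ℂ × ℂ).1, (v : ℂ × ℂ).2] P)
    (hequiv : ∀ (t : ℂˣ) (v w : PuncturedPlane),
      (w : ℂ × ℂ) = ((t : ℂ) ^ m * (v : ℂ × ℂ).1, (t : ℂ) ^ n * (v : ℂ × ℂ).2) →
      g w = (t : ℂ) ^ d * g v)
    (v : PuncturedPlane) :
    eval ![(v : ℂ × ℂ).1, (v : ℂ × ℂ).2] (weightedHomogeneousComponent ![m, n] d P) = g v := by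
  rw [hg v]
  refine eval_weightedHomogeneousComponent_of_scaling _ _ _ _ fun t ht => ?_
  have hw : ((t ^ m * (v : ℂ × ℂ).1, t ^ n * (v : ℂ × ℂ).2) : ℂ × ℂ) ≠ 0 := fun h =>
    v.2 (Prod.ext (by simpa [ht] using congrArg Prod.fst h)
      (by simpa [ht] using congrArg Prod.snd h))
  have h := hequiv (Units.mk0 t ht) v ⟨_, hw⟩ rfl
  rw [hg, hg] at h
  have hpt : (fun i => t ^ ![m, n] i * ![(v : ℂ × ℂ).1, (v : ℂ × ℂ).2] i) =
      ![t ^ m * (v : ℂ × ℂ).1, t ^ n * (v : ℂ × ℂ).2] := by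
    funext i
    fin_cases i <;> rfl
  rw [hpt]
  exact h

theorem PuncturedPlane.ne_zero_of_injective_triangular {k : ℕ} (hk : 0 < k)
    {F : PuncturedPlane → PuncturedPlane} (hF : Function.Injective F) {l₁ l₂ a : ℂ}
    (h : ∀ v : PuncturedPlane,
      (F v : ℂ × ℂ) = (l₁ * (v : ℂ × ℂ).1, l₂ * (v : ℂ × ℂ).2 + a * (v : ℂ × ℂ).1 ^ k)) :
    l₁ ≠ 0 ∧ l₂ ≠ 0 := by
  have hl₂ : l₂ ≠ 0 := fun h₂ => (F ⟨(0, 1), by simp⟩).2 <| by simp [h, h₂, hk.ne']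
  refine ⟨fun h₁ => ?_, hl₂⟩
  have ha : a ≠ 0 := fun ha => (F ⟨(1, 0), by simp⟩).2 <| by simp [h, h₁, ha]
  have := @hF ⟨(1, 0), by simp⟩ ⟨(0, a / l₂), by simp [ha, hl₂]⟩ <| Subtype.ext <| by
    simp [h, h₁, hk.ne', mul_div_cancel₀ a hl₂]
  simpa using congrArg (fun v : PuncturedPlane => (v : ℂ × ℂ).1) this

theorem equivariant_automorphism_is_triangular_general
    (m n : ℕ) (hm : 0 < m) (hmn : m < n) (hdvd : m ∣ n)
    (f : PuncturedPlane ≃ PuncturedPlane)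
    (hpoly : ∃ P Q : MvPolynomial (Fin 2) ℂ, ∀ v : PuncturedPlane,
      ((f v : ℂ × ℂ)) =
        (MvPolynomial.eval ![(v : ℂ × ℂ).1, (v : ℂ × ℂ).2] P,
         MvPolynomial.eval ![(v : ℂ × ℂ).1, (v : ℂ × ℂ).2] Q))
    (hequiv : ∀ (t : ℂˣ) (v w : PuncturedPlane),
      (w : ℂ × ℂ) = ((t : ℂ) ^ m * (v : ℂ × ℂ).1, (t : ℂ) ^ n * (v : ℂ × ℂ).2) →
      (f w : ℂ × ℂ) = ((t : ℂ) ^ m * (f v : ℂ × ℂ).1, (t : ℂ) ^ n * (f v : ℂ × ℂ).2)) :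
    (∃ (l₁ l₂ : ℂˣ) (a : ℂ), ∀ v : PuncturedPlane,
      (f v : ℂ × ℂ) =
        ((l₁ : ℂ) * (v : ℂ × ℂ).1,
         (l₂ : ℂ) * (v : ℂ × ℂ).2 + a * (v : ℂ × ℂ).1 ^ (n / m))) ∧
    (∀ (l₁ l₂ l₁' l₂' : ℂˣ) (a a' x y : ℂ),
      ((l₁ : ℂ) * ((l₁' : ℂ) * x),
       (l₂ : ℂ) * ((l₂' : ℂ) * y + a' * x ^ (n / m)) + a * ((l₁' : ℂ) * x) ^ (n / m)) =
      (((l₁ : ℂ) * (l₁' : ℂ)) * x,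
       ((l₂ : ℂ) * (l₂' : ℂ)) * y +
         ((l₂ : ℂ) * a' + (l₁' : ℂ) ^ (n / m) * a) * x ^ (n / m))) := by
  obtain ⟨k, rfl⟩ := hdvd
  have hk : 1 < k := Nat.lt_of_mul_lt_mul_left (a := m) (by rwa [mul_one])
  obtain ⟨P, Q, hPQ⟩ := hpoly
  have hf : ∀ v : PuncturedPlane, (f v : ℂ × ℂ) =
      (coeff (Finsupp.single 0 1) P * (v : ℂ × ℂ).1,
       coeff (Finsupp.single 1 1) Q * (v : ℂ × ℂ).2 +
         coeff (Finsupp.single 0 k) Q * (v : ℂ × ℂ).1 ^ k) := fun v => by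
    rw [← eval_weightedHomogeneousComponent_left hm hk P _ (v : ℂ × ℂ).2,
      ← eval_weightedHomogeneousComponent_right hm (by omega) Q,
      eval_weightedHomogeneousComponent_of_equivariant (g := fun v => (f v : ℂ × ℂ).1)
        (fun v => congrArg Prod.fst (hPQ v)) (fun t v w hw => congrArg Prod.fst (hequiv t v w hw)),
      eval_weightedHomogeneousComponent_of_equivariant (g := fun v => (f v : ℂ × ℂ).2)
        (fun v => congrArg Prod.snd (hPQ v)) (fun t v w hw => congrArg Prod.snd (hequiv t v w hw))]
  obtain ⟨h₁, h₂⟩ := PuncturedPlane.ne_zero_of_injective_triangular (by omega) f.injective hf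
  rw [Nat.mul_div_cancel_left k hm]
  refine ⟨⟨Units.mk0 _ h₁, Units.mk0 _ h₂, _, hf⟩, fun l₁ l₂ l₁' l₂' a a' x y => ?_⟩
  ext <;> ring

/-- Let `m | n`, `m < n`, be positive integers and let `ℂ*` act on `ℂ² \ {0}` with weights
`(m, n)`. Then every `ℂ*`-equivariant algebraic automorphism of `ℂ² \ {0}` has the form
`(x, y) ↦ (λ₁ x, λ₂ y + a x^(n/m))` with `λ₁, λ₂ ∈ ℂ*`, `a ∈ ℂ`; moreover composition of
two such maps obeys the semidirect product law of `(ℂ* × ℂ*) ⋉ ℂ`: the composite of the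
maps with parameters `(λ₁, λ₂, a)` and `(λ₁', λ₂', a')` has parameters
`(λ₁λ₁', λ₂λ₂', λ₂ a' + λ₁'^(n/m) a)`. -/
theorem equivariant_automorphism_is_triangular
    (m n : ℕ) (hm : 0 < m) (hmn : m < n) (hdvd : m ∣ n)
    (f : PuncturedPlane ≃ PuncturedPlane)
    (hpoly : ∃ P Q : MvPolynomial (Fin 2) ℂ, ∀ v : PuncturedPlane,
      ((f v : ℂ × ℂ)) =
        (MvPolynomial.eval ![(v : ℂ × ℂ).1, (v : ℂ × ℂ).2] P,
         MvPolynomial.eval ![(v : ℂ × ℂ).1, (v : ℂ × ℂ).2] Q))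
    (hpoly' : ∃ P Q : MvPolynomial (Fin 2) ℂ, ∀ v : PuncturedPlane,
      ((f.symm v : ℂ × ℂ)) =
        (MvPolynomial.eval ![(v : ℂ × ℂ).1, (v : ℂ × ℂ).2] P,
         MvPolynomial.eval ![(v : ℂ × ℂ).1, (v : ℂ × ℂ).2] Q))
    (hequiv : ∀ (t : ℂˣ) (v w : PuncturedPlane),
      (w : ℂ × ℂ) = ((t : ℂ) ^ m * (v : ℂ × ℂ).1, (t : ℂ) ^ n * (v : ℂ × ℂ).2) →
      (f w : ℂ × ℂ) = ((t : ℂ) ^ m * (f v : ℂ × ℂ).1, (t : ℂ) ^ n * (f v : ℂ × ℂ).2)) :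
    (∃ (l₁ l₂ : ℂˣ) (a : ℂ), ∀ v : PuncturedPlane,
      (f v : ℂ × ℂ) =
        ((l₁ : ℂ) * (v : ℂ × ℂ).1,
         (l₂ : ℂ) * (v : ℂ × ℂ).2 + a * (v : ℂ × ℂ).1 ^ (n / m))) ∧
    (∀ (l₁ l₂ l₁' l₂' : ℂˣ) (a a' x y : ℂ),
      ((l₁ : ℂ) * ((l₁' : ℂ) * x),
       (l₂ : ℂ) * ((l₂' : ℂ) * y + a' * x ^ (n / m)) + a * ((l₁' : ℂ) * x) ^ (n / m)) =
      (((l₁ : ℂ) * (l₁' : ℂ)) * x,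
       ((l₂ : ℂ) * (l₂' : ℂ)) * y +
         ((l₂ : ℂ) * a' + (l₁' : ℂ) ^ (n / m) * a) * x ^ (n / m))) :=
  equivariant_automorphism_is_triangular_general m n hm hmn hdvd f hpoly hequiv
end

section
/- Let H be a finite group, A = Z(H) its center, a ∈ A, and let n, m be coprime positive integers with r, s ∈ ℤ such that rn + sm = 1. Form G = (H × ℤ)/⟨(sa, −n)⟩ and G' = (H × ℤ)/⟨(ra, −m)⟩. Then the pushout (amalgamated free product diagram) of the two maps H × ℤ → G (1 ↦ 1 on the ℤ factor) and H × ℤ → G' (1 ↦ −1 on the ℤ factor), i.e., the colimit of G ← H × ℤ → G', is naturally isomorphic to H/⟨⟨a⟩⟩, the quotient of H by the normal closure of a. -/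
/-!
In the pushout `P` write `j : H → P` for the image of `H` and `u` for the image of the generator
of `ℤ`. The two quotients impose `j (aˢ) = uⁿ` and `j (aʳ) = u⁻ᵐ`, hence
`u = u ^ (rn + sm) = j (aˢʳ) * j (aʳˢ)⁻¹ = 1` and then `j a = j (aʳ) ^ n * j (aˢ) ^ m = 1`.
So `P` is generated by the image of `H` subject to `a = 1`; conversely forgetting `ℤ` maps both
quotients of `H × ℤ` onto `H ⧸ ⟨⟨a⟩⟩` compatibly, and the two maps are mutually inverse.
-/

/-- The quotient `(H × ℤ)/⟨(x, −k)⟩` of `H × ℤ` by the normal closure of `(x, −k)`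
(a central element when `x` is central in `H`). -/
abbrev GqGroup (H : Type*) [Group H] (x : H) (k : ℕ) : Type _ :=
  (H × Multiplicative ℤ) ⧸
    Subgroup.normalClosure {((x, Multiplicative.ofAdd (-(k : ℤ))) : H × Multiplicative ℤ)}

/-- The map `H × ℤ → (H × ℤ)/⟨(x, −k)⟩` which is the identity on `H` and `1 ↦ 1` on `ℤ`. -/
def toGq (H : Type*) [Group H] (x : H) (k : ℕ) :
    (H × Multiplicative ℤ) →* GqGroup H x k :=
  QuotientGroup.mk'
    (Subgroup.normalClosure
      {((x, Multiplicative.ofAdd (-(k : ℤ))) : H × Multiplicative ℤ)})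

/-- The map `H × ℤ → (H × ℤ)/⟨(x, −k)⟩` which is the identity on `H` and `1 ↦ −1` on `ℤ`. -/
def toGqNeg (H : Type*) [Group H] (x : H) (k : ℕ) :
    (H × Multiplicative ℤ) →* GqGroup H x k :=
  (toGq H x k).comp ((MonoidHom.id H).prodMap (invMonoidHom : Multiplicative ℤ →* Multiplicative ℤ))

/-- The two-element family of groups `G = (H × ℤ)/⟨(x, −n)⟩` and `G' = (H × ℤ)/⟨(y, −m)⟩`. -/
def pushoutFam (H : Type*) [Group H] (x y : H) (n m : ℕ) : Bool → Type _ :=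
  fun b => match b with
  | true => GqGroup H x n
  | false => GqGroup H y m

instance (H : Type*) [Group H] (x y : H) (n m : ℕ) :
    ∀ b, Group (pushoutFam H x y n m b) := fun b => by
  cases b <;> (dsimp [pushoutFam]; infer_instance)

/-- The two structure maps `H × ℤ → G`, `H × ℤ → G'` (the second inverting `ℤ`). -/
def pushoutMaps (H : Type*) [Group H] (x y : H) (n m : ℕ) :
    ∀ b, (H × Multiplicative ℤ) →* pushoutFam H x y n m b := fun b => match b with
  | true => toGq H x n
  | false => toGqNeg H y m

open Monoid Multiplicative

namespace Monoid.PushoutI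

variable {ι : Type*} {G : ι → Type*} {H K : Type*} [∀ i, Monoid (G i)] [Monoid H] [Monoid K]
  {φ : ∀ i, H →* G i}

theorem base_eq_one_of_map_eq_one (i : ι) {h : H} (hh : φ i h = 1) : base φ h = 1 := by
  rw [← of_apply_eq_base φ i, hh, map_one]

theorem hom_ext_of_surjective (hφ : ∀ i, Function.Surjective (φ i)) {f g : PushoutI φ →* K}
    (h : f.comp (base φ) = g.comp (base φ)) : f = g :=
  hom_ext (fun i => (MonoidHom.cancel_right (hφ i)).mp <| by
    rw [MonoidHom.comp_assoc, MonoidHom.comp_assoc, of_comp_eq_base, h]) h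

end Monoid.PushoutI

theorem eq_one_of_zpow_eq_zpow_of_bezout {G : Type*} [Group G] {g u : G} {n m r s : ℤ}
    (hrs : r * n + s * m = 1) (hs : g ^ s = u ^ n) (hr : g ^ r = u ^ (-m)) :
    g = 1 ∧ u = 1 := by
  have hu : u = 1 := calc
    u = u ^ (r * n + s * m) := by rw [hrs, zpow_one]
    _ = (u ^ n) ^ r * ((u ^ (-m)) ^ s)⁻¹ := by group
    _ = 1 := by rw [← hs, ← hr]; group
  refine ⟨?_, hu⟩
  calc g = g ^ (r * n + s * m) := by rw [hrs, zpow_one]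
    _ = (g ^ r) ^ n * (g ^ s) ^ m := by group
    _ = 1 := by rw [hr, hs, hu]; group

namespace MonoidHom

variable {H P : Type*} [Group H] [Group P] (f : H × Multiplicative ℤ →* P)

theorem map_zpow_mk_ofAdd (x : H) (k l : ℤ) :
    f (x ^ k, ofAdd l) = f (x, 1) ^ k * f (1, ofAdd 1) ^ l := by
  rw [← map_zpow, ← map_zpow, ← map_mul]
  congr 1
  ext <;> simp [← ofAdd_zsmul]

theorem map_eq_map_mk_one (hu : f (1, ofAdd 1) = 1) (g : H × Multiplicative ℤ) :
    f g = f (g.1, 1) := by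
  simpa [hu] using f.map_zpow_mk_ofAdd g.1 1 (toAdd g.2)

theorem map_eq_one_of_bezout {a : H} {n m r s : ℤ} (hrs : r * n + s * m = 1)
    (hs : f (a ^ s, ofAdd (-n)) = 1) (hr : f (a ^ r, ofAdd m) = 1) :
    f (a, 1) = 1 ∧ f (1, ofAdd 1) = 1 := by
  rw [map_zpow_mk_ofAdd, zpow_neg, mul_inv_eq_one] at hs
  rw [map_zpow_mk_ofAdd] at hr
  exact eq_one_of_zpow_eq_zpow_of_bezout hrs hs (by rw [zpow_neg]; exact eq_inv_of_mul_eq_one_left hr)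

end MonoidHom

section

variable {H : Type*} [Group H] {x y : H} {n m : ℕ}

theorem toGq_surjective : Function.Surjective (toGq H x n) :=
  QuotientGroup.mk'_surjective _

theorem toGqNeg_surjective : Function.Surjective (toGqNeg H x n) :=
  toGq_surjective.comp <| Prod.map_surjective.2 ⟨Function.surjective_id, inv_surjective⟩

theorem pushoutMaps_surjective : ∀ b, Function.Surjective (pushoutMaps H x y n m b)
  | true => toGq_surjective
  | false => toGqNeg_surjective

theorem toGq_mk_eq_one : toGq H x n (x, ofAdd (-n)) = 1 :=
  (QuotientGroup.eq_one_iff _).2 (Subgroup.subset_normalClosure rfl)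

theorem toGqNeg_mk_eq_one : toGqNeg H x n (x, ofAdd n) = 1 :=
  toGq_mk_eq_one

theorem base_pushoutMaps_left : PushoutI.base (pushoutMaps H x y n m) (x, ofAdd (-n)) = 1 :=
  PushoutI.base_eq_one_of_map_eq_one true toGq_mk_eq_one

theorem base_pushoutMaps_right : PushoutI.base (pushoutMaps H x y n m) (y, ofAdd m) = 1 :=
  PushoutI.base_eq_one_of_map_eq_one false toGqNeg_mk_eq_one

variable (N : Subgroup H) [N.Normal]

def pushoutToQuotient (hx : x ∈ N) (hy : y ∈ N) :
    PushoutI (pushoutMaps H x y n m) →* H ⧸ N :=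
  let p := (QuotientGroup.mk' N).comp (MonoidHom.fst H (Multiplicative ℤ))
  have hp {z : H} (hz : z ∈ N) (k : ℕ) :
      Subgroup.normalClosure {((z, ofAdd (-(k : ℤ))) : H × Multiplicative ℤ)} ≤ p.ker :=
    Subgroup.normalClosure_le_normal <| Set.singleton_subset_iff.2 <| by simpa [p] using hz
  PushoutI.lift
    (fun | true => QuotientGroup.lift _ p (hp hx n) | false => QuotientGroup.lift _ p (hp hy m))
    p (by rintro (_ | _) <;> rfl)

theorem pushoutToQuotient_base (hx : x ∈ N) (hy : y ∈ N) (g : H × Multiplicative ℤ) :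
    pushoutToQuotient N hx hy (PushoutI.base (pushoutMaps H x y n m) g) = g.1 := by
  rw [pushoutToQuotient, PushoutI.lift_base]; rfl

end

theorem pushout_iso_quotient_general
    (H : Type*) [Group H] (a : H)
    (n m : ℕ)
    (r s : ℤ) (hrs : r * (n : ℤ) + s * (m : ℤ) = 1) :
    Nonempty
      (Monoid.PushoutI (pushoutMaps H (a ^ s) (a ^ r) n m) ≃*
        (H ⧸ Subgroup.normalClosure {a})) := by
  set φ := pushoutMaps H (a ^ s) (a ^ r) n m
  obtain ⟨hja, hu⟩ :=
    (PushoutI.base φ).map_eq_one_of_bezout hrs base_pushoutMaps_left base_pushoutMaps_right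
  have haN : a ∈ Subgroup.normalClosure {a} := Subgroup.subset_normalClosure rfl
  let toPushout : H ⧸ Subgroup.normalClosure {a} →* PushoutI φ :=
    QuotientGroup.lift _ ((PushoutI.base φ).comp (MonoidHom.inl H _))
      (Subgroup.normalClosure_le_normal (by simpa using hja))
  let toQuotient : PushoutI φ →* H ⧸ Subgroup.normalClosure {a} :=
    pushoutToQuotient _ (zpow_mem haN s) (zpow_mem haN r)
  refine ⟨toQuotient.toMulEquiv toPushout ?_ ?_⟩
  · refine PushoutI.hom_ext_of_surjective pushoutMaps_surjective (MonoidHom.ext fun g => ?_)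
    simp only [MonoidHom.comp_apply, MonoidHom.id_apply, toQuotient]
    rw [pushoutToQuotient_base, (PushoutI.base φ).map_eq_map_mk_one hu g]
    rfl
  · refine QuotientGroup.monoidHom_ext _ (MonoidHom.ext fun x => ?_)
    simp only [MonoidHom.comp_apply, MonoidHom.id_apply, QuotientGroup.mk'_apply, toPushout,
      QuotientGroup.lift_mk, MonoidHom.inl_apply, toQuotient]
    rw [pushoutToQuotient_base]

/-- Let `H` be a finite group, `a` a central element, `n, m` coprime positive integers and
`r, s ∈ ℤ` with `rn + sm = 1`. Form `G = (H × ℤ)/⟨(aˢ, −n)⟩` and `G' = (H × ℤ)/⟨(aʳ, −m)⟩`.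
Then the pushout (in the category of groups) of `G ← H × ℤ → G'`, where the first map is
the identity on `H` and `+1` on `ℤ` and the second is the identity on `H` and `−1` on `ℤ`,
is naturally isomorphic to `H/⟨⟨a⟩⟩`, the quotient of `H` by the normal closure of `a`. -/
theorem pushout_iso_quotient
    (H : Type*) [Group H] [Finite H] (a : H) (ha : a ∈ Subgroup.center H)
    (n m : ℕ) (hn : 0 < n) (hm : 0 < m) (hcop : Nat.gcd m n = 1)
    (r s : ℤ) (hrs : r * (n : ℤ) + s * (m : ℤ) = 1) :
    Nonempty
      (Monoid.PushoutI (pushoutMaps H (a ^ s) (a ^ r) n m) ≃*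
        (H ⧸ Subgroup.normalClosure {a})) :=
  pushout_iso_quotient_general H a n m r s hrs
end
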